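/- Let A ∈ GL(n,ℝ), α ≠ -n, l ∈ ℕ, and let f : ℝⁿ → ℂ be continuous with f(ξ) = f(ξ/|ξ|)|ξ|^α (log|ξ|)^l for |ξ| ≥ 1. Then ⨍_{ℝⁿ} f(Aξ) dξ = |det A|^{-1} ⨍_{ℝⁿ} f(ξ) dξ, where ⨍ denotes the regularized integral (constant term in the R → ∞ expansion of ∫_{|ξ|≤R}). -/

import Mathlib

open Real Filter MeasureTheory

/-- `HasRegIntegral n g I` means that `∫_{|ξ|≤R} g dξ` has an asymptotic expansion
`∑_i p_i(log R) R^{β_i} + p₀(log R)` (with all `β_i ≠ 0`) as `R → ∞`, whose constant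
term `p₀(0)` equals `I`.  This is the regularized integral `⨍_{ℝⁿ} g dξ = I`. -/
def HasRegIntegral (n : ℕ) (g : EuclideanSpace ℝ (Fin n) → ℂ) (I : ℂ) : Prop :=
  ∃ (m : ℕ) (β : Fin m → ℝ) (p : Fin m → Polynomial ℂ) (p₀ : Polynomial ℂ),
    (∀ i, β i ≠ 0) ∧ p₀.coeff 0 = I ∧
    Filter.Tendsto
      (fun R : ℝ =>
        (∫ ξ in {ξ : EuclideanSpace ℝ (Fin n) | ‖ξ‖ ≤ R}, g ξ)
          - ∑ i, (p i).eval ((Real.log R : ℝ) : ℂ) * ((R ^ (β i) : ℝ) : ℂ)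
          - p₀.eval ((Real.log R : ℝ) : ℂ))
      Filter.atTop (nhds 0)

section Aux

open Metric Set Pointwise

variable {n : ℕ}

lemma cov_clm (L : EuclideanSpace ℝ (Fin n) →L[ℝ] EuclideanSpace ℝ (Fin n))
    (hL : Function.Injective L) (s : Set (EuclideanSpace ℝ (Fin n))) (hs : MeasurableSet s)
    (g : EuclideanSpace ℝ (Fin n) → ℂ) :
    ∫ x in (L : EuclideanSpace ℝ (Fin n) → EuclideanSpace ℝ (Fin n)) '' s, g x
      = ((|LinearMap.det (L : EuclideanSpace ℝ (Fin n) →ₗ[ℝ] EuclideanSpace ℝ (Fin n))| : ℝ) : ℂ)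
        * ∫ x in s, g (L x) := by
  rw [integral_image_eq_integral_abs_det_fderiv_smul volume hs
    (fun x _ => L.hasFDerivWithinAt) hL.injOn g]
  simp_rw [Complex.real_smul]
  rw [integral_const_mul]

lemma smul_cov (R : ℝ) (hR : 0 < R) (E : Set (EuclideanSpace ℝ (Fin n))) (hE : MeasurableSet E)
    (g : EuclideanSpace ℝ (Fin n) → ℂ) :
    ∫ x in R • E, g x = ((R ^ n : ℝ) : ℂ) * ∫ x in E, g (R • x) := by
  have h := cov_clm (R • ContinuousLinearMap.id ℝ (EuclideanSpace ℝ (Fin n)))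
    (smul_right_injective _ hR.ne') E hE g
  simp only [ContinuousLinearMap.coe_smul', ContinuousLinearMap.coe_id', Pi.smul_apply, id] at h
  rw [show (fun x => R • x) '' E = R • E from rfl] at h
  rw [h]
  congr 2
  rw [ContinuousLinearMap.coe_smul, ContinuousLinearMap.coe_id, LinearMap.det_smul,
    LinearMap.det_id, finrank_euclideanSpace_fin]
  simp [abs_of_pos hR]

lemma scale_integral (α : ℝ) (l : ℕ) (f : EuclideanSpace ℝ (Fin n) → ℂ) (hf : Continuous f)
    (hhom : ∀ ξ : EuclideanSpace ℝ (Fin n), 1 ≤ ‖ξ‖ →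
      f ξ = f (‖ξ‖⁻¹ • ξ) * ((‖ξ‖ ^ α : ℝ) : ℂ) * ((Real.log ‖ξ‖ : ℝ) : ℂ) ^ l)
    (c C : ℝ) (hc : 0 < c) (E : Set (EuclideanSpace ℝ (Fin n))) (hE : MeasurableSet E)
    (hEc : ∀ η ∈ E, c < ‖η‖) (hEC : E ⊆ closedBall 0 C) :
    ∃ Q : Polynomial ℂ, ∀ R : ℝ, c⁻¹ ≤ R →
      ∫ x in R • E, f x = ((R ^ (α + n) : ℝ) : ℂ) * Q.eval ((Real.log R : ℝ) : ℂ) := by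
  set gk : ℕ → EuclideanSpace ℝ (Fin n) → ℂ := fun k η =>
    f (‖η‖⁻¹ • η) * ((‖η‖ ^ α : ℝ) : ℂ) * ((Real.log ‖η‖ : ℝ) : ℂ) ^ (l - k) with hgk
  have hEK : E ⊆ closedBall (0 : EuclideanSpace ℝ (Fin n)) C \ ball 0 c := by
    intro η hη
    exact ⟨hEC hη, by simp only [mem_ball, dist_zero_right, not_lt]; exact (hEc η hη).le⟩
  have hKcompact : IsCompact (closedBall (0 : EuclideanSpace ℝ (Fin n)) C \ ball 0 c) :=
    (isCompact_closedBall _ _).diff isOpen_ball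
  have hKpos : ∀ η ∈ closedBall (0 : EuclideanSpace ℝ (Fin n)) C \ ball 0 c, 0 < ‖η‖ := by
    intro η hη
    have : c ≤ ‖η‖ := by simpa [mem_ball, dist_zero_right, not_lt] using hη.2
    linarith
  have hint : ∀ k, IntegrableOn (gk k) E := by
    intro k
    have hcont : ContinuousOn (gk k) (closedBall (0 : EuclideanSpace ℝ (Fin n)) C \ ball 0 c) := by
      apply ContinuousOn.mul
      apply ContinuousOn.mul
      · apply hf.comp_continuousOn
        exact ContinuousOn.smul ((continuous_norm.continuousOn).inv₀
          (fun η hη => (hKpos η hη).ne')) continuousOn_id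
      · exact Complex.continuous_ofReal.comp_continuousOn
          (fun η hη => ((Real.continuousAt_rpow_const _ _ (Or.inl (hKpos η hη).ne')).comp
            continuous_norm.continuousAt).continuousWithinAt)
      · exact (Complex.continuous_ofReal.comp_continuousOn
          (fun η hη => ((Real.continuousAt_log (hKpos η hη).ne').comp
            continuous_norm.continuousAt).continuousWithinAt)).pow _
    exact (hcont.integrableOn_compact hKcompact).mono_set hEK
  refine ⟨∑ k ∈ Finset.range (l + 1),
    Polynomial.C ((l.choose k : ℂ) * ∫ η in E, gk k η) * Polynomial.X ^ k, ?_⟩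
  intro R hR
  have hR0 : 0 < R := lt_of_lt_of_le (inv_pos.mpr hc) hR
  rw [smul_cov R hR0 E hE f]
  have step2 : ∀ η ∈ E, f (R • η) = ∑ k ∈ Finset.range (l + 1),
      ((l.choose k : ℂ) * ((Real.log R : ℝ) : ℂ) ^ k * ((R ^ α : ℝ) : ℂ)) * gk k η := by
    intro η hη
    have hηpos : 0 < ‖η‖ := lt_trans hc (hEc η hη)
    have hnorm : ‖R • η‖ = R * ‖η‖ := by
      rw [norm_smul, Real.norm_of_nonneg hR0.le]
    have h1 : 1 ≤ ‖R • η‖ := by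
      rw [hnorm]
      calc (1:ℝ) = c⁻¹ * c := by field_simp
      _ ≤ R * ‖η‖ := by
        apply mul_le_mul hR (hEc η hη).le hc.le hR0.le
    rw [hhom _ h1]
    have e1 : ‖R • η‖⁻¹ • (R • η) = ‖η‖⁻¹ • η := by
      rw [hnorm, smul_smul]
      congr 1
      field_simp
    have e2 : ‖R • η‖ ^ α = R ^ α * ‖η‖ ^ α := by
      rw [hnorm, Real.mul_rpow hR0.le (norm_nonneg _)]
    have e3 : Real.log ‖R • η‖ = Real.log R + Real.log ‖η‖ := by
      rw [hnorm, Real.log_mul hR0.ne' hηpos.ne']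
    rw [e1, e2, e3]
    push_cast
    rw [add_pow, Finset.mul_sum]
    apply Finset.sum_congr rfl
    intro k hk
    simp only [hgk]
    ring
  rw [MeasureTheory.setIntegral_congr_fun hE step2]
  rw [MeasureTheory.integral_finset_sum _ (fun k _ => ((hint k).const_mul _))]
  simp_rw [MeasureTheory.integral_const_mul]
  rw [Polynomial.eval_finset_sum, Finset.mul_sum, Finset.mul_sum]
  apply Finset.sum_congr rfl
  intro k hk
  have hrpow : (R : ℝ) ^ (α + (n:ℝ)) = R ^ α * R ^ (n:ℕ) := by
    rw [Real.rpow_add hR0, Real.rpow_natCast]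
  simp only [Polynomial.eval_mul, Polynomial.eval_C, Polynomial.eval_pow, Polynomial.eval_X]
  rw [show ((R ^ (α + n) : ℝ) : ℂ) = ((R ^ α : ℝ) : ℂ) * ((R ^ n : ℝ) : ℂ) by
    push_cast [hrpow]; ring]
  ring

lemma smul_diff_eq (T : EuclideanSpace ℝ (Fin n) ≃L[ℝ] EuclideanSpace ℝ (Fin n))
    (R a b : ℝ) (hR : 0 < R) :
    R • ((T '' closedBall 0 a) \ closedBall 0 b)
      = (T '' closedBall 0 (R * a)) \ closedBall 0 (R * b) := by
  ext ξ
  rw [mem_smul_set_iff_inv_smul_mem₀ hR.ne']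
  have hsymm : T.symm (R⁻¹ • ξ) = R⁻¹ • T.symm ξ := map_smul _ _ _
  simp only [mem_diff, T.image_eq_preimage_symm, mem_preimage, mem_closedBall_zero_iff,
    hsymm, norm_smul, norm_inv, Real.norm_of_nonneg hR.le]
  rw [inv_mul_le_iff₀ hR, inv_mul_le_iff₀ hR]

end Aux

/-- Transformation rule for the regularized integral in the non-critical case:
if `f(ξ) = f(ξ/|ξ|)|ξ|^α (log|ξ|)^l` for `|ξ| ≥ 1` with `α ≠ -n`, and
`A ∈ GL(n,ℝ)`, then `⨍ f(Aξ) dξ = |det A|⁻¹ ⨍ f(ξ) dξ`. -/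
theorem stmt5 (n : ℕ) (A : Matrix (Fin n) (Fin n) ℝ) (hA : IsUnit A.det)
    (α : ℝ) (hα : α ≠ -(n : ℝ)) (l : ℕ)
    (f : EuclideanSpace ℝ (Fin n) → ℂ) (hf : Continuous f)
    (hhom : ∀ ξ : EuclideanSpace ℝ (Fin n), 1 ≤ ‖ξ‖ →
      f ξ = f (‖ξ‖⁻¹ • ξ) * ((‖ξ‖ ^ α : ℝ) : ℂ) * ((Real.log ‖ξ‖ : ℝ) : ℂ) ^ l)
    (I : ℂ) (hI : HasRegIntegral n f I) :
    HasRegIntegral n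
      (fun ξ : EuclideanSpace ℝ (Fin n) =>
        f ((WithLp.equiv 2 (Fin n → ℝ)).symm (A.mulVec ((WithLp.equiv 2 (Fin n → ℝ)) ξ))))
      (((|A.det|⁻¹ : ℝ) : ℂ) * I) := by
  classical
  open Metric Set Pointwise in
  obtain ⟨m, β, p, p₀, hβ, hp₀, htend⟩ := hI
  have hdetL : LinearMap.det
      (Matrix.toEuclideanLin A : EuclideanSpace ℝ (Fin n) →ₗ[ℝ] EuclideanSpace ℝ (Fin n))
      = A.det := by
    have h : (Matrix.toEuclideanLin A : EuclideanSpace ℝ (Fin n) →ₗ[ℝ] EuclideanSpace ℝ (Fin n))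
        = ((WithLp.linearEquiv 2 ℝ (Fin n → ℝ)).symm : (Fin n → ℝ) →ₗ[ℝ] _) ∘ₗ (Matrix.toLin' A)
          ∘ₗ (((WithLp.linearEquiv 2 ℝ (Fin n → ℝ)).symm.symm) : _ →ₗ[ℝ] (Fin n → ℝ)) := rfl
    rw [h, LinearMap.det_conj (Matrix.toLin' A) (WithLp.linearEquiv 2 ℝ (Fin n → ℝ)).symm,
      LinearMap.det_toLin']
  have hdet0 : LinearMap.det
      (Matrix.toEuclideanLin A : EuclideanSpace ℝ (Fin n) →ₗ[ℝ] EuclideanSpace ℝ (Fin n)) ≠ 0 := by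
    rw [hdetL]; exact hA.ne_zero
  set T := ((Matrix.toEuclideanLin A :
      EuclideanSpace ℝ (Fin n) →ₗ[ℝ] EuclideanSpace ℝ (Fin n)).equivOfDetNeZero
    hdet0).toContinuousLinearEquiv with hTdef
  have hT2 : ∀ ξ : EuclideanSpace ℝ (Fin n),
      f ((WithLp.equiv 2 (Fin n → ℝ)).symm (A.mulVec ((WithLp.equiv 2 (Fin n → ℝ)) ξ))) = f (T ξ) :=
    fun ξ => rfl
  have hdetT : LinearMap.det
      ((T : EuclideanSpace ℝ (Fin n) →L[ℝ] EuclideanSpace ℝ (Fin n)) :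
        EuclideanSpace ℝ (Fin n) →ₗ[ℝ] EuclideanSpace ℝ (Fin n)) = A.det := by
    rw [← hdetL]; congr 1
  have hdabs : (|A.det| : ℝ) ≠ 0 := abs_ne_zero.mpr hA.ne_zero
  set d : ℂ := ((|A.det|⁻¹ : ℝ) : ℂ) with hddef
  have hd : ((|A.det| : ℝ) : ℂ) * d = 1 := by
    rw [hddef, ← Complex.ofReal_mul, mul_inv_cancel₀ hdabs, Complex.ofReal_one]
  set NS : ℝ := ‖(T.symm : EuclideanSpace ℝ (Fin n) →L[ℝ] EuclideanSpace ℝ (Fin n))‖ with hNS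
  have hNSnn : (0:ℝ) ≤ NS := norm_nonneg _
  set cA : ℝ := min 1 (NS + 1)⁻¹ with hcAdef
  have hcA : 0 < cA := lt_min one_pos (by positivity)
  have hcA1 : cA ≤ 1 := min_le_left _ _
  have hcA2 : cA * (NS + 1) ≤ 1 := by
    have h1 : cA ≤ (NS + 1)⁻¹ := min_le_right _ _
    have h2 : cA * (NS + 1) ≤ (NS + 1)⁻¹ * (NS + 1) :=
      mul_le_mul_of_nonneg_right h1 (by positivity)
    rwa [inv_mul_cancel₀ (by positivity : (NS:ℝ) + 1 ≠ 0)] at h2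
  set CA : ℝ := max 1 (‖(T : EuclideanSpace ℝ (Fin n) →L[ℝ] EuclideanSpace ℝ (Fin n))‖ + 1)
    with hCA
  set E₁ : Set (EuclideanSpace ℝ (Fin n)) := T '' closedBall 0 1 \ closedBall 0 cA with hE₁def
  set E₂ : Set (EuclideanSpace ℝ (Fin n)) := closedBall 0 1 \ closedBall 0 cA with hE₂def
  have hE₁m : MeasurableSet E₁ :=
    ((((isCompact_closedBall (0 : EuclideanSpace ℝ (Fin n)) 1).image
      T.continuous).isClosed).measurableSet).diff measurableSet_closedBall
  have hE₂m : MeasurableSet E₂ := measurableSet_closedBall.diff measurableSet_closedBall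
  have hE₁c : ∀ η ∈ E₁, cA < ‖η‖ := by
    rintro η ⟨_, hη⟩
    simpa [mem_closedBall_zero_iff, not_le] using hη
  have hE₂c : ∀ η ∈ E₂, cA < ‖η‖ := by
    rintro η ⟨_, hη⟩
    simpa [mem_closedBall_zero_iff, not_le] using hη
  have hE₁C : E₁ ⊆ closedBall 0 CA := by
    rintro η ⟨⟨y, hy, rfl⟩, _⟩
    rw [mem_closedBall_zero_iff]
    calc ‖T y‖ ≤ ‖(T : EuclideanSpace ℝ (Fin n) →L[ℝ] EuclideanSpace ℝ (Fin n))‖ * ‖y‖ :=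
        (T : EuclideanSpace ℝ (Fin n) →L[ℝ] EuclideanSpace ℝ (Fin n)).le_opNorm y
      _ ≤ (‖(T : EuclideanSpace ℝ (Fin n) →L[ℝ] EuclideanSpace ℝ (Fin n))‖ + 1) * 1 := by
          have := mem_closedBall_zero_iff.mp hy
          nlinarith [norm_nonneg (T : EuclideanSpace ℝ (Fin n) →L[ℝ] EuclideanSpace ℝ (Fin n))]
      _ ≤ CA := by rw [mul_one, hCA]; exact le_max_right _ _
  have hE₂C : E₂ ⊆ closedBall 0 CA :=
    fun η hη => closedBall_subset_closedBall (le_max_left _ _) hη.1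
  obtain ⟨Q₁, hQ₁⟩ := scale_integral α l f hf hhom cA CA hcA E₁ hE₁m hE₁c hE₁C
  obtain ⟨Q₂, hQ₂⟩ := scale_integral α l f hf hhom cA CA hcA E₂ hE₂m hE₂c hE₂C
  have hsub1 : ∀ R : ℝ, 0 < R →
      closedBall (0 : EuclideanSpace ℝ (Fin n)) (R * cA) ⊆ T '' closedBall 0 R := by
    intro R hR ξ hξ
    rw [T.image_eq_preimage_symm, mem_preimage, mem_closedBall_zero_iff]
    rw [mem_closedBall_zero_iff] at hξ
    calc ‖T.symm ξ‖ ≤ NS * ‖ξ‖ :=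
        (T.symm : EuclideanSpace ℝ (Fin n) →L[ℝ] EuclideanSpace ℝ (Fin n)).le_opNorm ξ
      _ ≤ NS * (R * cA) := mul_le_mul_of_nonneg_left hξ hNSnn
      _ ≤ R := by nlinarith
  have hkey : ∀ R : ℝ, cA⁻¹ ≤ R →
      (∫ ξ in closedBall (0 : EuclideanSpace ℝ (Fin n)) R, f (T ξ)) =
        d * (∫ ξ in closedBall (0 : EuclideanSpace ℝ (Fin n)) R, f ξ)
          + d * ((R ^ (α + n) : ℝ) : ℂ)
            * (Q₁.eval ((Real.log R : ℝ) : ℂ) - Q₂.eval ((Real.log R : ℝ) : ℂ)) := by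
    intro R hR
    have hR0 : 0 < R := lt_of_lt_of_le (inv_pos.mpr hcA) hR
    have hcov := cov_clm (T : EuclideanSpace ℝ (Fin n) →L[ℝ] EuclideanSpace ℝ (Fin n))
      T.injective (closedBall 0 R) measurableSet_closedBall f
    rw [hdetT] at hcov
    rw [ContinuousLinearEquiv.coe_coe] at hcov
    have hITR : IntegrableOn f (T '' closedBall 0 R) :=
      (hf.continuousOn).integrableOn_compact
        ((isCompact_closedBall (0 : EuclideanSpace ℝ (Fin n)) R).image T.continuous)
    have hIBR : IntegrableOn f (closedBall (0 : EuclideanSpace ℝ (Fin n)) R) :=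
      (hf.continuousOn).integrableOn_compact (isCompact_closedBall _ _)
    have hd1 := integral_diff measurableSet_closedBall hITR (hsub1 R hR0)
    have hd2 := integral_diff measurableSet_closedBall hIBR
      (closedBall_subset_closedBall (by nlinarith : R * cA ≤ R))
    have hs1 : T '' closedBall 0 R \ closedBall 0 (R * cA) = R • E₁ := by
      rw [hE₁def, smul_diff_eq T R 1 cA hR0, mul_one]
    have hs2 : closedBall (0 : EuclideanSpace ℝ (Fin n)) R \ closedBall 0 (R * cA) = R • E₂ := by
      have h := smul_diff_eq (ContinuousLinearEquiv.refl ℝ (EuclideanSpace ℝ (Fin n))) R 1 cA hR0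
      simp only [ContinuousLinearEquiv.coe_refl', image_id] at h
      rw [hE₂def, h, mul_one]
    rw [hs1, hQ₁ R hR] at hd1
    rw [hs2, hQ₂ R hR] at hd2
    have hgoal : d * (((|A.det| : ℝ) : ℂ)
          * ∫ ξ in closedBall (0 : EuclideanSpace ℝ (Fin n)) R, f (T ξ))
        = d * (∫ ξ in closedBall (0 : EuclideanSpace ℝ (Fin n)) R, f ξ)
          + d * ((R ^ (α + n) : ℝ) : ℂ)
            * (Q₁.eval ((Real.log R : ℝ) : ℂ) - Q₂.eval ((Real.log R : ℝ) : ℂ)) := by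
      have hre : d * (∫ x in T '' closedBall (0 : EuclideanSpace ℝ (Fin n)) R, f x)
          = d * (∫ ξ in closedBall (0 : EuclideanSpace ℝ (Fin n)) R, f ξ)
            + d * ((R ^ (α + n) : ℝ) : ℂ)
              * (Q₁.eval ((Real.log R : ℝ) : ℂ) - Q₂.eval ((Real.log R : ℝ) : ℂ)) := by
        linear_combination d * hd2 - d * hd1
      rw [← hcov]
      exact hre
    calc (∫ ξ in closedBall (0 : EuclideanSpace ℝ (Fin n)) R, f (T ξ))
        = d * (((|A.det| : ℝ) : ℂ)
            * ∫ ξ in closedBall (0 : EuclideanSpace ℝ (Fin n)) R, f (T ξ)) := by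
          rw [← mul_assoc, mul_comm d ((|A.det| : ℝ) : ℂ), hd, one_mul]
      _ = _ := hgoal
  refine ⟨m + 1, Fin.cons (α + n) β,
    Fin.cons (Polynomial.C d * (Q₁ - Q₂)) (fun i => Polynomial.C d * p i),
    Polynomial.C d * p₀, ?_, ?_, ?_⟩
  · intro i
    refine Fin.cases ?_ (fun j => ?_) i
    · simp only [Fin.cons_zero]
      intro h
      exact hα (by linarith)
    · simpa using hβ j
  · simp [Polynomial.coeff_C_mul, hp₀]
  · have hset : ∀ R : ℝ, {ξ : EuclideanSpace ℝ (Fin n) | ‖ξ‖ ≤ R}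
        = closedBall (0 : EuclideanSpace ℝ (Fin n)) R := by
      intro R; ext ξ; simp [mem_closedBall_zero_iff]
    have h2 : Filter.Tendsto (fun R : ℝ => d *
        ((∫ ξ in {ξ : EuclideanSpace ℝ (Fin n) | ‖ξ‖ ≤ R}, f ξ)
          - ∑ i, (p i).eval ((Real.log R : ℝ) : ℂ) * ((R ^ (β i) : ℝ) : ℂ)
          - p₀.eval ((Real.log R : ℝ) : ℂ))) Filter.atTop (nhds 0) := by
      simpa using htend.const_mul d
    refine Filter.Tendsto.congr' ?_ h2
    filter_upwards [eventually_ge_atTop cA⁻¹] with R hR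
    simp only [hT2, hset]
    rw [hkey R hR, Fin.sum_univ_succ]
    simp only [Fin.cons_zero, Fin.cons_succ, Polynomial.eval_mul, Polynomial.eval_C,
      Polynomial.eval_sub]
    simp only [mul_sub, Finset.mul_sum, mul_assoc]
    ring
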